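/- Let d be a positive integer, α ∈ (0,2), β > 0, s ∈ [0,d], and let μ be a nonzero finite Borel measure on ℝ^d with compact support S satisfying condition (F2)-s with constant C̲. Fix R > 0 and c₃ > 0. Then there exists Λ₀ > 0 such that for every k ≥ Λ₀ and every (t,x) with t > 0 and d(x,S) < t^{1/α} R, one has h_k(t,x)^{1+β} ≥ c₃ · k · t^{-1/β − 1} · μ(B(x, t^{1/α} R)) / min(t^{s/α}, 1). -/

import Mathlib

open MeasureTheory Metric Set Filter Topology

/-- The profile function `W(r) = log(e + r²)/(1 + r^{d+α})`. -/
noncomputable def Wfn (d : ℕ) (α r : ℝ) : ℝ :=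
  Real.log (Real.exp 1 + r ^ 2) / (1 + r ^ ((d : ℝ) + α))

/-- `w_t(x) = t^{-1/β}(1 + t^{-s/α}) W(t^{-1/α}|x|)`. -/
noncomputable def wfn (d : ℕ) (α β s t : ℝ) (x : EuclideanSpace ℝ (Fin d)) : ℝ :=
  t ^ (-(1:ℝ)/β) * (1 + t ^ (-s/α)) * Wfn d α (t ^ (-(1:ℝ)/α) * ‖x‖)

/-- `h_k(t,x) = k ∫ w_t(x - y) dμ(y)`. -/
noncomputable def hfn (d : ℕ) (α β s : ℝ) (μ : Measure (EuclideanSpace ℝ (Fin d)))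
    (k t : ℝ) (x : EuclideanSpace ℝ (Fin d)) : ℝ :=
  k * ∫ y, wfn d α β s t (x - y) ∂μ

/-- `S` is the closed support of `μ`. -/
def IsSupportOf (d : ℕ) (μ : Measure (EuclideanSpace ℝ (Fin d)))
    (S : Set (EuclideanSpace ℝ (Fin d))) : Prop :=
  IsClosed S ∧ μ Sᶜ = 0 ∧ ∀ x ∈ S, ∀ r : ℝ, 0 < r → 0 < μ (ball x r)

/-- Condition (F2)-s with constant `Cund` on the set `S`. -/
def IsF2 (d : ℕ) (μ : Measure (EuclideanSpace ℝ (Fin d)))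
    (S : Set (EuclideanSpace ℝ (Fin d))) (Cund s : ℝ) : Prop :=
  ∀ x ∈ S, ∀ r : ℝ, 0 < r → r ≤ 1 →
    ENNReal.ofReal (Cund * r ^ s) ≤ μ (closedBall x r)

/-!
On the scale `t^{1/α}`, the kernel `w_t` is at least `t^{-1/β}(1 + t^{-s/α})/(1 + K^{d+α})` on the
ball of scaled radius `K`, which gives two lower bounds for `I = ∫ w_t(x - y) dμ(y)`. Integrating
over `B(x, t^{1/α}R)` gives `I ≳ t^{-1/β} μ(B(x, t^{1/α}R)) / min(t^{s/α}, 1)`. A point `z ∈ S`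
within `t^{1/α}R` of `x` gives the uniform bound `I ≳ t^{-1/β}`: for `t ≤ 1` from (F2) on
`B(z, t^{1/α})`, whose mass `≳ t^{s/α}` cancels the factor `1 + t^{-s/α}`, and for `t ≥ 1` by
integrating over all of `S`. Then `(kI)^{1+β} = kI · (kI)^β`, where the first factor is bounded
below by the first bound and `(kI)^β ≳ k^β t^{-1}` by the second; `k^β` absorbs `c₃`.
-/

lemma rpow_neg_div_eq_inv {t : ℝ} (ht : 0 < t) (a b : ℝ) : t ^ (-a / b) = (t ^ (a / b))⁻¹ := by
  rw [neg_div, Real.rpow_neg ht.le]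

lemma inv_min_one_le_one_add_inv {x : ℝ} (hx : 0 < x) : (min x 1)⁻¹ ≤ 1 + x⁻¹ := by
  rcases le_total x 1 with h | h
  · rw [min_eq_left h]; linarith
  · rw [min_eq_right h, inv_one]; linarith [inv_pos.2 hx]

lemma mul_rpow_le_rpow_one_add {a b H β : ℝ} (ha : 0 ≤ a) (haH : a ≤ H) (hbH : b ≤ H)
    (hβ : 0 ≤ β) : b * a ^ β ≤ H ^ (1 + β) := by
  have hH : 0 ≤ H := ha.trans haH
  rw [Real.rpow_add' hH (by positivity), Real.rpow_one]
  exact mul_le_mul hbH (Real.rpow_le_rpow ha haH hβ) (Real.rpow_nonneg ha β) hH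

lemma Wfn_nonneg (d : ℕ) (α : ℝ) {r : ℝ} (hr : 0 ≤ r) : 0 ≤ Wfn d α r := by
  unfold Wfn
  have hpow : 0 ≤ r ^ ((d : ℝ) + α) := Real.rpow_nonneg hr _
  have hlog : 1 ≤ Real.exp 1 + r ^ 2 := by nlinarith [Real.add_one_le_exp 1, sq_nonneg r]
  exact div_nonneg (Real.log_nonneg hlog) (by linarith)

lemma one_div_le_Wfn (d : ℕ) {α r K : ℝ} (hα : 0 < α) (hr : 0 ≤ r) (hrK : r ≤ K) :
    1 / (1 + K ^ ((d : ℝ) + α)) ≤ Wfn d α r := by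
  have hden : 0 < 1 + r ^ ((d : ℝ) + α) := by positivity
  have hden_le : 1 + r ^ ((d : ℝ) + α) ≤ 1 + K ^ ((d : ℝ) + α) := by gcongr
  have hlog : 1 ≤ Real.log (Real.exp 1 + r ^ 2) := by
    rw [Real.le_log_iff_exp_le (by positivity)]
    nlinarith [sq_nonneg r]
  calc 1 / (1 + K ^ ((d : ℝ) + α)) ≤ 1 / (1 + r ^ ((d : ℝ) + α)) :=
        one_div_le_one_div_of_le hden hden_le
    _ ≤ Wfn d α r := div_le_div_of_nonneg_right hlog hden.le

lemma continuousOn_Wfn (d : ℕ) {α : ℝ} (hα : 0 < α) : ContinuousOn (Wfn d α) (Ici 0) := by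
  have hrpow : ContinuousOn (fun r : ℝ => r ^ ((d : ℝ) + α)) (Ici 0) :=
    continuousOn_id.rpow_const fun _ _ => Or.inr (by positivity)
  refine ContinuousOn.div ?_ (continuousOn_const.add hrpow) fun r (hr : 0 ≤ r) => ?_
  · exact (continuous_const.add (continuous_pow 2)).continuousOn.log
      fun r _ => (by positivity : (0 : ℝ) < Real.exp 1 + r ^ 2).ne'
  · have : 0 ≤ r ^ ((d : ℝ) + α) := Real.rpow_nonneg hr _
    positivity

section Kernel

variable {d : ℕ} {α β s t : ℝ}

lemma continuous_wfn (hα : 0 < α) (ht : 0 ≤ t) : Continuous (wfn d α β s t) := by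
  unfold wfn
  exact continuous_const.mul <| (continuousOn_Wfn d hα).comp_continuous (by fun_prop)
    fun x => mem_Ici.2 (by positivity)

lemma le_wfn (hα : 0 < α) (ht : 0 < t) {K : ℝ} {z : EuclideanSpace ℝ (Fin d)}
    (hz : ‖z‖ ≤ t ^ (1 / α) * K) :
    t ^ (-1 / β) * (1 + t ^ (-s / α)) / (1 + K ^ ((d : ℝ) + α)) ≤ wfn d α β s t z := by
  rw [div_eq_mul_one_div, wfn]
  gcongr
  refine one_div_le_Wfn d hα (by positivity) ?_
  rw [rpow_neg_div_eq_inv ht, inv_mul_le_iff₀ (by positivity)]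
  exact hz

variable {μ : Measure (EuclideanSpace ℝ (Fin d))} [IsFiniteMeasure μ]
  {S : Set (EuclideanSpace ℝ (Fin d))}

lemma integrable_wfn_sub (hS : IsCompact S) (hμS : μ Sᶜ = 0) (hα : 0 < α) (ht : 0 ≤ t)
    (x : EuclideanSpace ℝ (Fin d)) : Integrable (fun y => wfn d α β s t (x - y)) μ := by
  have hcont : Continuous fun y => wfn d α β s t (x - y) :=
    (continuous_wfn hα ht).comp (continuous_const.sub continuous_id)
  have hrestrict : μ.restrict S = μ := Measure.restrict_eq_self_of_ae_mem (ae_iff.2 hμS)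
  simpa only [IntegrableOn, hrestrict] using hcont.continuousOn.integrableOn_compact (μ := μ) hS

lemma mul_measureReal_le_integral_wfn (hS : IsCompact S) (hμS : μ Sᶜ = 0) (hα : 0 < α)
    (ht : 0 < t) {x : EuclideanSpace ℝ (Fin d)} {B : Set (EuclideanSpace ℝ (Fin d))}
    (hB : MeasurableSet B) {K : ℝ} (hBK : ∀ y ∈ B, ‖x - y‖ ≤ t ^ (1 / α) * K) :
    t ^ (-1 / β) * (1 + t ^ (-s / α)) / (1 + K ^ ((d : ℝ) + α)) * μ.real B ≤
      ∫ y, wfn d α β s t (x - y) ∂μ := by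
  have hint := integrable_wfn_sub (β := β) (s := s) hS hμS hα ht.le x
  calc _ ≤ ∫ y in B, wfn d α β s t (x - y) ∂μ :=
        setIntegral_ge_of_const_le_real hB (measure_ne_top μ B)
          (fun y hy => le_wfn hα ht (hBK y hy)) hint.integrableOn
    _ ≤ _ := setIntegral_le_integral hint
        (Eventually.of_forall fun y => ?_)
  unfold wfn
  exact mul_nonneg (by positivity) (Wfn_nonneg d α (by positivity))

end Kernel

section LowerBounds

variable {d : ℕ} {α β s t R : ℝ} {μ : Measure (EuclideanSpace ℝ (Fin d))} [IsFiniteMeasure μ]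
  {S : Set (EuclideanSpace ℝ (Fin d))} {x z : EuclideanSpace ℝ (Fin d)}

lemma integral_wfn_ge_of_le_one (hS : IsCompact S) (hμS : μ Sᶜ = 0) {Cund : ℝ}
    (hCund : 0 ≤ Cund) (hF2 : IsF2 d μ S Cund s) (hα : 0 < α) (hR : 0 ≤ R) (ht : 0 < t)
    (ht1 : t ≤ 1) (hz : z ∈ S) (hxz : dist x z ≤ t ^ (1 / α) * R) :
    t ^ (-1 / β) * (Cund / (1 + (R + 1) ^ ((d : ℝ) + α))) ≤
      ∫ y, wfn d α β s t (x - y) ∂μ := by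
  set u := t ^ (1 / α)
  have hu : 0 < u := by positivity
  have hus : u ^ s = t ^ (s / α) := by rw [← Real.rpow_mul ht.le, one_div_mul_eq_div]
  have hball : Cund * t ^ (s / α) ≤ μ.real (closedBall z u) := by
    have hF := hF2 z hz u hu (Real.rpow_le_one ht.le ht1 (by positivity))
    rw [← hus]
    exact ENNReal.ofReal_le_iff_le_toReal (measure_ne_top μ _) |>.1 hF
  have hint := mul_measureReal_le_integral_wfn (β := β) (s := s) hS hμS hα ht
    (x := x) (K := R + 1) measurableSet_closedBall fun y (hy : dist y z ≤ u) => by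
      rw [← dist_eq_norm x y, mul_add, mul_one]
      linarith [dist_triangle_right x y z]
  rw [rpow_neg_div_eq_inv ht s α] at hint
  set v := t ^ (s / α)
  have hv : 0 < v := by positivity
  calc t ^ (-1 / β) * (Cund / (1 + (R + 1) ^ ((d : ℝ) + α)))
      ≤ t ^ (-1 / β) * (Cund / (1 + (R + 1) ^ ((d : ℝ) + α))) * (1 + v) :=
        le_mul_of_one_le_right (by positivity) (by linarith)
    _ = t ^ (-1 / β) * (1 + v⁻¹) / (1 + (R + 1) ^ ((d : ℝ) + α)) * (Cund * v) := by
        field_simp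
        ring
    _ ≤ t ^ (-1 / β) * (1 + v⁻¹) / (1 + (R + 1) ^ ((d : ℝ) + α)) *
          μ.real (closedBall z u) := by
        gcongr
    _ ≤ _ := hint

lemma integral_wfn_ge_of_one_le (hS : IsCompact S) (hμS : μ Sᶜ = 0) (hα : 0 < α) (hR : 0 ≤ R)
    (ht1 : 1 ≤ t) (hz : z ∈ S) (hxz : dist x z ≤ t ^ (1 / α) * R) :
    t ^ (-1 / β) * (μ.real univ / (1 + (R + Metric.diam S) ^ ((d : ℝ) + α))) ≤
      ∫ y, wfn d α β s t (x - y) ∂μ := by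
  have ht : 0 < t := one_pos.trans_le ht1
  have hu : 1 ≤ t ^ (1 / α) := Real.one_le_rpow ht1 (by positivity)
  have hint := mul_measureReal_le_integral_wfn (β := β) (s := s) hS hμS hα ht
    (K := R + Metric.diam S) hS.isClosed.measurableSet fun y hy => by
      have hyz := dist_le_diam_of_mem hS.isBounded hz hy
      rw [← dist_eq_norm x y, mul_add]
      nlinarith [dist_triangle x z y, Metric.diam_nonneg (s := S)]
  rw [measureReal_def, measure_of_measure_compl_eq_zero hμS, ← measureReal_def] at hint
  set D := 1 + (R + Metric.diam S) ^ ((d : ℝ) + α)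
  calc t ^ (-1 / β) * (μ.real univ / D) = t ^ (-1 / β) / D * μ.real univ * 1 := by ring
    _ ≤ t ^ (-1 / β) / D * μ.real univ * (1 + t ^ (-s / α)) := by
        gcongr
        linarith [Real.rpow_nonneg ht.le (-s / α)]
    _ = _ := by ring
    _ ≤ _ := hint

lemma exists_pos_forall_mul_le_integral_wfn (hμ : μ ≠ 0) (hS : IsCompact S) (hμS : μ Sᶜ = 0)
    {Cund : ℝ} (hCund : 0 < Cund) (hF2 : IsF2 d μ S Cund s) (hα : 0 < α) (hR : 0 ≤ R) :
    ∃ c₀ > 0, ∀ t > 0, ∀ x, infDist x S < t ^ (1 / α) * R →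
      t ^ (-1 / β) * c₀ ≤ ∫ y, wfn d α β s t (x - y) ∂μ := by
  have : NeZero μ := ⟨hμ⟩
  have hSne : S.Nonempty := nonempty_of_measure_ne_zero <| by
    rw [measure_of_measure_compl_eq_zero hμS]; exact NeZero.ne _
  refine ⟨min (Cund / (1 + (R + 1) ^ ((d : ℝ) + α)))
      (μ.real univ / (1 + (R + Metric.diam S) ^ ((d : ℝ) + α))),
    lt_min (by positivity) (div_pos measureReal_univ_pos (by positivity)), ?_⟩
  intro t ht x hx
  obtain ⟨z, hz, hxz⟩ := (infDist_lt_iff hSne).1 hx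
  rcases le_total t 1 with ht1 | ht1
  · exact le_trans (by gcongr; exact min_le_left _ _)
      (integral_wfn_ge_of_le_one hS hμS hCund.le hF2 hα hR ht ht1 hz hxz.le)
  · exact le_trans (by gcongr; exact min_le_right _ _)
      (integral_wfn_ge_of_one_le hS hμS hα hR ht1 hz hxz.le)

lemma div_le_integral_wfn (hS : IsCompact S) (hμS : μ Sᶜ = 0) (hα : 0 < α) (hR : 0 ≤ R)
    {t : ℝ} (ht : 0 < t) (x : EuclideanSpace ℝ (Fin d)) :
    t ^ (-1 / β) * μ.real (closedBall x (t ^ (1 / α) * R)) /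
        ((1 + R ^ ((d : ℝ) + α)) * min (t ^ (s / α)) 1) ≤
      ∫ y, wfn d α β s t (x - y) ∂μ := by
  have hint := mul_measureReal_le_integral_wfn (β := β) (s := s) hS hμS hα ht (x := x)
    (K := R) measurableSet_closedBall fun y (hy : dist y x ≤ _) => by
      rwa [← dist_eq_norm x y, dist_comm]
  rw [rpow_neg_div_eq_inv ht s α] at hint
  calc _ = t ^ (-1 / β) / (1 + R ^ ((d : ℝ) + α)) * μ.real (closedBall x (t ^ (1 / α) * R)) *
        (min (t ^ (s / α)) 1)⁻¹ := by rw [← div_div]; ring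
    _ ≤ t ^ (-1 / β) / (1 + R ^ ((d : ℝ) + α)) * μ.real (closedBall x (t ^ (1 / α) * R)) *
        (1 + (t ^ (s / α))⁻¹) := by
        gcongr
        exact inv_min_one_le_one_add_inv (by positivity)
    _ = _ := by ring
    _ ≤ _ := hint

end LowerBounds

theorem stmt_9_general (d : ℕ) (α β s : ℝ) (hα : α ∈ Ioo (0:ℝ) 2)
    (hβ : 0 < β)
    (μ : Measure (EuclideanSpace ℝ (Fin d))) [IsFiniteMeasure μ] (hμ : μ ≠ 0)
    (S : Set (EuclideanSpace ℝ (Fin d))) (hScpt : IsCompact S)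
    (hSsupp : IsSupportOf d μ S)
    (Cund : ℝ) (hCund : 0 < Cund) (hF2 : IsF2 d μ S Cund s)
    (R : ℝ) (hR : 0 < R) (c₃ : ℝ) (hc₃ : 0 < c₃) :
    ∃ Λ₀ > (0:ℝ), ∀ k : ℝ, Λ₀ ≤ k → ∀ t > (0:ℝ), ∀ x : EuclideanSpace ℝ (Fin d),
      infDist x S < t ^ ((1:ℝ)/α) * R →
      c₃ * k * t ^ (-(1:ℝ)/β - 1) *
          ((μ (closedBall x (t ^ ((1:ℝ)/α) * R))).toReal / min (t ^ (s/α)) 1) ≤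
        hfn d α β s μ k t x ^ (1 + β) := by
  obtain ⟨c₀, hc₀, hlower⟩ := exists_pos_forall_mul_le_integral_wfn (β := β) hμ hScpt
    hSsupp.2.1 hCund hF2 hα.1 hR.le
  set A := 1 + R ^ ((d : ℝ) + α)
  refine ⟨(c₃ * A) ^ β⁻¹ / c₀, by positivity, fun k hk t ht x hx => ?_⟩
  have hk0 : 0 < k := lt_of_lt_of_le (by positivity) hk
  have hkc : c₃ * A ≤ (k * c₀) ^ β :=
    (Real.rpow_inv_le_iff_of_pos (by positivity) (by positivity) hβ).1 ((div_le_iff₀ hc₀).1 hk)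
  set τ := t ^ (-1 / β)
  have hτ : t ^ (-1 / β - 1) = τ * τ ^ β := by
    rw [← Real.rpow_mul ht.le, ← Real.rpow_add ht]
    congr 1
    field_simp
    ring
  set M := μ.real (closedBall x (t ^ (1 / α) * R))
  set m := min (t ^ (s / α)) 1
  have ha : k * (τ * c₀) ≤ hfn d α β s μ k t x :=
    mul_le_mul_of_nonneg_left (hlower t ht x hx) hk0.le
  have hb : k * (τ * M / (A * m)) ≤ hfn d α β s μ k t x :=
    mul_le_mul_of_nonneg_left (div_le_integral_wfn hScpt hSsupp.2.1 hα.1 hR.le ht x) hk0.le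
  calc c₃ * k * t ^ (-(1:ℝ)/β - 1) * (M / m) = c₃ * A * τ ^ β * (k * (τ * M / (A * m))) := by
        have hA : 0 < A := by positivity
        rw [hτ]
        field_simp
    _ ≤ (k * c₀) ^ β * τ ^ β * (k * (τ * M / (A * m))) := by gcongr
    _ = k * (τ * M / (A * m)) * (k * (τ * c₀)) ^ β := by
        rw [Real.mul_rpow hk0.le hc₀.le, Real.mul_rpow hk0.le (by positivity : 0 ≤ τ * c₀),
          Real.mul_rpow (by positivity : 0 ≤ τ) hc₀.le]
        ring
    _ ≤ hfn d α β s μ k t x ^ (1 + β) := mul_rpow_le_rpow_one_add (by positivity) ha hb hβ.le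

/-- Inner-region estimate: for `k` large, the nonlinear term dominates:
`h_k(t,x)^{1+β} ≥ c₃ k t^{-1/β-1} μ(B(x, t^{1/α}R)) / min(t^{s/α},1)` whenever
`d(x,S) < t^{1/α} R`. -/
theorem stmt_9 (d : ℕ) (hd : 0 < d) (α β s : ℝ) (hα : α ∈ Ioo (0:ℝ) 2)
    (hβ : 0 < β) (hs : s ∈ Icc (0:ℝ) (d:ℝ))
    (μ : Measure (EuclideanSpace ℝ (Fin d))) [IsFiniteMeasure μ] (hμ : μ ≠ 0)
    (S : Set (EuclideanSpace ℝ (Fin d))) (hScpt : IsCompact S)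
    (hSsupp : IsSupportOf d μ S)
    (Cund : ℝ) (hCund : 0 < Cund) (hF2 : IsF2 d μ S Cund s)
    (R : ℝ) (hR : 0 < R) (c₃ : ℝ) (hc₃ : 0 < c₃) :
    ∃ Λ₀ > (0:ℝ), ∀ k : ℝ, Λ₀ ≤ k → ∀ t > (0:ℝ), ∀ x : EuclideanSpace ℝ (Fin d),
      infDist x S < t ^ ((1:ℝ)/α) * R →
      c₃ * k * t ^ (-(1:ℝ)/β - 1) *
          ((μ (closedBall x (t ^ ((1:ℝ)/α) * R))).toReal / min (t ^ (s/α)) 1) ≤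
        hfn d α β s μ k t x ^ (1 + β) :=
  stmt_9_general d α β s hα hβ μ hμ S hScpt hSsupp Cund hCund hF2 R hR c₃ hc₃
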